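/- Let Q ∈ Matrix (Fin N) (Fin N) ℝ be invertible, let E₁, E₂ ∈ Matrix (Fin N) (Fin N) ℝ satisfy ‖Q⁻¹·E₁‖ ≤ β and ‖Q⁻¹·E₂‖ ≤ β for some 0 ≤ β < 1 (operator norms), and let h, e₁, e₂ ∈ ℝ^N. Then Q + E₁ and Q + E₂ are invertible and ‖(Q + E₁)⁻¹·(h + e₁) − (Q + E₂)⁻¹·(h + e₂)‖ ≤ ‖Q⁻¹·(e₁ − e₂)‖ + (2β/(1−β))·‖Q⁻¹·h‖ + (β/(1−β))·(‖Q⁻¹·e₁‖ + ‖Q⁻¹·e₂‖). -/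
import Mathlib


open Matrix

/-- Operator (spectral) 2-norm of a real matrix. -/
noncomputable def matOpNorm {m n : ℕ} (A : Matrix (Fin m) (Fin n) ℝ) : ℝ :=
  ‖LinearMap.toContinuousLinearMap (Matrix.toEuclideanLin A)‖

/-- Matrix-vector product as a map between Euclidean spaces. -/
noncomputable def matVec {m n : ℕ} (A : Matrix (Fin m) (Fin n) ℝ)
    (v : EuclideanSpace ℝ (Fin n)) : EuclideanSpace ℝ (Fin m) :=
  Matrix.toEuclideanLin A v

variable {n : ℕ}
lemma matVec_eq (A : Matrix (Fin n) (Fin n) ℝ) (v : EuclideanSpace ℝ (Fin n)) :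
    matVec A v = Matrix.toEuclideanCLM (𝕜 := ℝ) A v := rfl
lemma matOpNorm_eq (A : Matrix (Fin n) (Fin n) ℝ) :
    matOpNorm A = ‖Matrix.toEuclideanCLM (𝕜 := ℝ) A‖ := rfl

lemma matVec_mul (A B : Matrix (Fin n) (Fin n) ℝ) (v : EuclideanSpace ℝ (Fin n)) :
    matVec (A * B) v = matVec A (matVec B v) := by
  simp only [matVec_eq, _root_.map_mul, ContinuousLinearMap.mul_apply]

lemma matVec_one (v : EuclideanSpace ℝ (Fin n)) :
    matVec (1 : Matrix (Fin n) (Fin n) ℝ) v = v := by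
  simp only [matVec_eq, _root_.map_one, ContinuousLinearMap.one_apply]

lemma matVec_add_mat (A B : Matrix (Fin n) (Fin n) ℝ) (v : EuclideanSpace ℝ (Fin n)) :
    matVec (A + B) v = matVec A v + matVec B v := by
  simp only [matVec_eq, map_add, ContinuousLinearMap.add_apply]

lemma matVec_add_vec (A : Matrix (Fin n) (Fin n) ℝ) (x y : EuclideanSpace ℝ (Fin n)) :
    matVec A (x + y) = matVec A x + matVec A y := by
  simp only [matVec_eq, map_add]

lemma matVec_sub_vec (A : Matrix (Fin n) (Fin n) ℝ) (x y : EuclideanSpace ℝ (Fin n)) :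
    matVec A (x - y) = matVec A x - matVec A y := by
  simp only [matVec_eq, map_sub]

lemma matVec_norm_le (A : Matrix (Fin n) (Fin n) ℝ) (v : EuclideanSpace ℝ (Fin n)) :
    ‖matVec A v‖ ≤ matOpNorm A * ‖v‖ := by
  rw [matVec_eq, matOpNorm_eq]; exact (Matrix.toEuclideanCLM (𝕜 := ℝ) A).le_opNorm v

lemma isUnit_one_add {β : ℝ} (A : Matrix (Fin n) (Fin n) ℝ)
    (hA : matOpNorm A ≤ β) (hβ1 : β < 1) : IsUnit (1 + A) := by
  have h' : ‖-(Matrix.toEuclideanCLM (𝕜 := ℝ) A)‖ < 1 := by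
    rw [norm_neg, ← matOpNorm_eq]; exact lt_of_le_of_lt hA hβ1
  have hu : IsUnit (1 - -(Matrix.toEuclideanCLM (𝕜 := ℝ) A)) := (Units.oneSub _ h').isUnit
  rw [sub_neg_eq_add] at hu
  have h2 : IsUnit (Matrix.toEuclideanCLM (𝕜 := ℝ) (1 + A)) := by
    rwa [map_add, _root_.map_one]
  have h3 := h2.map (Matrix.toEuclideanCLM (𝕜 := ℝ)).symm
  simpa using h3

lemma key_est {β : ℝ} (A : Matrix (Fin n) (Fin n) ℝ)
    (hA : matOpNorm A ≤ β) (hβ0 : 0 ≤ β) (hβ1 : β < 1) (x : EuclideanSpace ℝ (Fin n)) :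
    ‖matVec (1 + A)⁻¹ x - x‖ ≤ β / (1 - β) * ‖x‖ := by
  have hu : IsUnit (1 + A) := isUnit_one_add A hA hβ1
  set y := matVec (1 + A)⁻¹ x with hy
  have hxy : matVec (1 + A) y = x := by
    rw [← matVec_mul, Matrix.mul_nonsing_inv _ ((Matrix.isUnit_iff_isUnit_det _).mp hu),
      matVec_one]
  have hx : x = y + matVec A y := by
    rw [← hxy, matVec_add_mat, matVec_one]
  have hβ' : 0 < 1 - β := by linarith
  have hAy : ‖matVec A y‖ ≤ β * ‖y‖ := by
    calc ‖matVec A y‖ ≤ matOpNorm A * ‖y‖ := matVec_norm_le A y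
    _ ≤ β * ‖y‖ := by
      exact mul_le_mul_of_nonneg_right hA (norm_nonneg y)
  have hyn : ‖y‖ ≤ ‖x‖ / (1 - β) := by
    have : ‖y‖ ≤ ‖x‖ + β * ‖y‖ := by
      calc ‖y‖ = ‖x - matVec A y‖ := by rw [hx]; rw [add_sub_cancel_right]
      _ ≤ ‖x‖ + ‖matVec A y‖ := norm_sub_le _ _
      _ ≤ ‖x‖ + β * ‖y‖ := by linarith
    rw [le_div_iff₀ hβ']; nlinarith
  have hyx : y - x = -(matVec A y) := by rw [hx]; abel
  rw [hyx, norm_neg]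
  calc ‖matVec A y‖ ≤ β * ‖y‖ := hAy
  _ ≤ β * (‖x‖ / (1 - β)) := mul_le_mul_of_nonneg_left hyn hβ0
  _ = β / (1 - β) * ‖x‖ := by ring


/-- descent-disagreement estimate of Appendices D–E:
bound on the difference of two perturbed Gauss–Newton descents. -/
theorem descent_disagreement_bound {N : ℕ}
    (Q E₁ E₂ : Matrix (Fin N) (Fin N) ℝ) (hQ : IsUnit Q.det)
    (β : ℝ) (hβ0 : 0 ≤ β) (hβ1 : β < 1)
    (h1 : matOpNorm (Q⁻¹ * E₁) ≤ β) (h2 : matOpNorm (Q⁻¹ * E₂) ≤ β)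
    (h e₁ e₂ : EuclideanSpace ℝ (Fin N)) :
    IsUnit (Q + E₁).det ∧ IsUnit (Q + E₂).det ∧
      ‖matVec (Q + E₁)⁻¹ (h + e₁) - matVec (Q + E₂)⁻¹ (h + e₂)‖ ≤
        ‖matVec Q⁻¹ (e₁ - e₂)‖ + 2 * β / (1 - β) * ‖matVec Q⁻¹ h‖ +
          β / (1 - β) * (‖matVec Q⁻¹ e₁‖ + ‖matVec Q⁻¹ e₂‖) := by
  have hβ' : 0 < 1 - β := by linarith
  have hQu : IsUnit Q := (Matrix.isUnit_iff_isUnit_det Q).mpr hQ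
  have hu1 : IsUnit (1 + Q⁻¹ * E₁) := isUnit_one_add _ h1 hβ1
  have hu2 : IsUnit (1 + Q⁻¹ * E₂) := isUnit_one_add _ h2 hβ1
  have hfac1 : Q + E₁ = Q * (1 + Q⁻¹ * E₁) := by
    rw [mul_add, mul_one, ← mul_assoc, Matrix.mul_nonsing_inv Q hQ, one_mul]
  have hfac2 : Q + E₂ = Q * (1 + Q⁻¹ * E₂) := by
    rw [mul_add, mul_one, ← mul_assoc, Matrix.mul_nonsing_inv Q hQ, one_mul]
  have hU1 : IsUnit (Q + E₁) := by rw [hfac1]; exact hQu.mul hu1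
  have hU2 : IsUnit (Q + E₂) := by rw [hfac2]; exact hQu.mul hu2
  refine ⟨(Matrix.isUnit_iff_isUnit_det _).mp hU1, (Matrix.isUnit_iff_isUnit_det _).mp hU2, ?_⟩
  set q := matVec Q⁻¹ h with hq
  set f₁ := matVec Q⁻¹ e₁ with hf₁
  set f₂ := matVec Q⁻¹ e₂ with hf₂
  have hv1 : matVec (Q + E₁)⁻¹ (h + e₁) = matVec (1 + Q⁻¹ * E₁)⁻¹ (q + f₁) := by
    rw [hfac1, Matrix.mul_inv_rev, matVec_mul, matVec_add_vec]
  have hv2 : matVec (Q + E₂)⁻¹ (h + e₂) = matVec (1 + Q⁻¹ * E₂)⁻¹ (q + f₂) := by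
    rw [hfac2, Matrix.mul_inv_rev, matVec_mul, matVec_add_vec]
  rw [hv1, hv2, matVec_sub_vec]
  set g₁ := matVec (1 + Q⁻¹ * E₁)⁻¹ (q + f₁) with hg₁
  set g₂ := matVec (1 + Q⁻¹ * E₂)⁻¹ (q + f₂) with hg₂
  have key1 : ‖g₁ - (q + f₁)‖ ≤ β / (1 - β) * ‖q + f₁‖ := key_est _ h1 hβ0 hβ1 _
  have key2 : ‖g₂ - (q + f₂)‖ ≤ β / (1 - β) * ‖q + f₂‖ := key_est _ h2 hβ0 hβ1 _
  have hdec : g₁ - g₂ = (g₁ - (q + f₁)) - (g₂ - (q + f₂)) + (f₁ - f₂) := by abel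
  have hb : 0 ≤ β / (1 - β) := div_nonneg hβ0 (le_of_lt hβ')
  have h₁n : ‖q + f₁‖ ≤ ‖q‖ + ‖f₁‖ := norm_add_le _ _
  have h₂n : ‖q + f₂‖ ≤ ‖q‖ + ‖f₂‖ := norm_add_le _ _
  calc ‖g₁ - g₂‖ ≤ ‖g₁ - (q + f₁)‖ + ‖g₂ - (q + f₂)‖ + ‖f₁ - f₂‖ := by
        rw [hdec]
        exact le_trans (norm_add_le _ _) (by gcongr; exact norm_sub_le _ _)
    _ ≤ β / (1 - β) * (‖q‖ + ‖f₁‖) + β / (1 - β) * (‖q‖ + ‖f₂‖) + ‖f₁ - f₂‖ := by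
        gcongr <;> [exact le_trans key1 (by gcongr); exact le_trans key2 (by gcongr)]
    _ ≤ ‖f₁ - f₂‖ + 2 * β / (1 - β) * ‖q‖ + β / (1 - β) * (‖f₁‖ + ‖f₂‖) := by
        have : 2 * β / (1 - β) = 2 * (β / (1 - β)) := by ring
        rw [this]; nlinarith [norm_nonneg q]
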